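/- arXiv:2503.05166 — 2 statements merged into one kernel-verified Lean document; each statement's English description precedes it below -/
import Mathlib

section
/- Let k ≥ 2 be an integer and let T be a balanced tree on 2k+1 vertices. If n ≥ 4k² is an integer such that ⌊(2n+k)/4⌋ is even, then there exists a T̂-free graph on n vertices with exactly f(n,k) edges; in particular ex(n, T̂) ≥ f(n,k). -/
/-- `f(n,k) = max{ n₀·n₁ + ⌊(k−1)·n₀/2⌋ : n₀ + n₁ = n }`. -/
def turanF (n k : ℕ) : ℕ :=
  (Finset.range (n + 1)).sup (fun n₀ => n₀ * (n - n₀) + (k - 1) * n₀ / 2)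

/-- The suspension `Ĥ` of a graph `H`: a new vertex (`none`) joined to all of `H`. -/
def suspension {V : Type*} (H : SimpleGraph V) : SimpleGraph (Option V) :=
  SimpleGraph.fromRel (fun x y => x = none ∨ ∃ a b, x = some a ∧ y = some b ∧ H.Adj a b)

/-- The Erdős–Sós conjecture holds for the tree `T'`: every graph on `N` vertices with
more than `(|T'|-2)·N/2` edges contains a copy of `T'`. -/
def ErdosSosProperty {m : ℕ} (T' : SimpleGraph (Fin m)) : Prop :=
  ∀ (N : ℕ) (G : SimpleGraph (Fin N)),
    2 * G.edgeSet.ncard > (m - 2) * N → ∃ f : T' →g G, Function.Injective f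

/-!
Let `P = ⌊(2n+k)/4⌋`, which is even, and `P / 2 = b·k + m·(k-1)` with `b, m ≥ 0` since
`P / 2 ≥ k²`. Let `H` be `b` crowns (`K_{k,k}` minus a perfect matching) and `m` copies of
`K_{k-1,k-1}`: a `(k-1)`-regular bipartite graph on `P` vertices whose components have at most
`2k` vertices. Join `H` completely to an independent set of `n - P` vertices; the result has
`P(n-P) + (k-1)P/2 = f(n,k)` edges.

In a copy of `T̂`, if the apex lies in the independent set then `T` lies in `H`, impossible as
`T` is connected on `2k+1` vertices. If the apex lies in `H`, the vertices of `T` mapped into `H`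
are neighbours of the apex, hence independent (`H` is triangle-free), and so are the others:
this is a proper 2-colouring of `T`, i.e. its bipartition, yet one class has at most
`k - 1 < k` vertices.
-/

open Finset

theorem mul_sub_two_mul_le_of_four_mul {N P : ℤ} (h₁ : 4 * P ≤ N + 1) (h₂ : N < 4 * P + 3)
    (m : ℤ) : m * (N - 2 * m) ≤ P * (N - 2 * P) := by
  have key : P * (N - 2 * P) - m * (N - 2 * m) = (P - m) * (2 * (P - m) + (N - 4 * P)) := by ring
  have : 0 ≤ (P - m) * (2 * (P - m) + (N - 4 * P)) := by
    obtain h | h | h := lt_trichotomy (P - m) 0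
    · exact mul_nonneg_of_nonpos_of_nonpos h.le (by omega)
    · simp [h]
    · exact mul_nonneg h.le (by omega)
  linarith

theorem turanF_eq {n k P : ℕ} (hk : 1 ≤ k) (h₁ : 4 * P ≤ 2 * n + k) (h₂ : 2 * n + k < 4 * P + 4)
    (hPn : P ≤ n) (hP : Even P) : turanF n k = P * (n - P) + (k - 1) * P / 2 := by
  have hkP : 2 ∣ (k - 1) * P := (even_iff_two_dvd.mp hP).mul_left _
  refine le_antisymm (Finset.sup_le fun m hm => ?_) ?_
  · have hmn : m ≤ n := Nat.lt_succ_iff.mp (Finset.mem_range.mp hm)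
    -- `m * (2n+k-1 - 2m) = 2·(m(n-m)) + (k-1)m` is twice the `m`-th term before rounding
    have key := mul_sub_two_mul_le_of_four_mul (N := 2 * n + k - 1) (P := P)
      (by omega) (by omega) m
    have : 2 * (m * (n - m)) + (k - 1) * m ≤ 2 * (P * (n - P)) + (k - 1) * P := by
      zify [hmn, hPn, hk] at key ⊢
      linarith
    omega
  · exact Finset.le_sup (f := fun n₀ => n₀ * (n - n₀) + (k - 1) * n₀ / 2)
      (Finset.mem_range.mpr (by omega))

theorem exists_mul_succ_add_mul_eq {K N : ℕ} (hN : K * (K - 1) ≤ N) :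
    ∃ b m, b * (K + 1) + m * K = N := by
  rcases Nat.eq_zero_or_pos K with rfl | hK
  · exact ⟨N, 0, by simp⟩
  have hr : N % K ≤ N / K := by
    have := Nat.mod_lt N hK
    have : K - 1 ≤ N / K := (Nat.le_div_iff_mul_le hK).mpr (by rw [mul_comm]; exact hN)
    omega
  refine ⟨N % K, N / K - N % K, ?_⟩
  calc N % K * (K + 1) + (N / K - N % K) * K = (N % K + (N / K - N % K)) * K + N % K := by ring
    _ = N := by rw [Nat.add_sub_cancel' hr, mul_comm]; exact Nat.div_add_mod N K

namespace SimpleGraph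

variable {V α β ι κ W U : Type*}

theorem Preconnected.apply_eq_of_adj {G : SimpleGraph V} (hG : G.Preconnected) {f : V → ι}
    (hf : ∀ u v, G.Adj u v → f u = f v) (u v : V) : f u = f v := by
  have h := (reachable_iff_reflTransGen u v).mp (hG u v)
  induction h with
  | refl => rfl
  | tail _ hab ih => exact ih.trans (hf _ _ hab)

theorem Preconnected.eq_or_eq_compl [Fintype V] [DecidableEq V] {G : SimpleGraph V}
    (hG : G.Preconnected) {A S : Finset V}
    (hA : ∀ x ∈ A, ∀ y ∈ A, ¬G.Adj x y) (hAc : ∀ x ∈ Aᶜ, ∀ y ∈ Aᶜ, ¬G.Adj x y)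
    (hS : ∀ x ∈ S, ∀ y ∈ S, ¬G.Adj x y) (hSc : ∀ x ∈ Sᶜ, ∀ y ∈ Sᶜ, ¬G.Adj x y) :
    S = A ∨ S = Aᶜ := by
  by_cases h : ∃ v, (v ∈ S ↔ v ∈ A)
  · obtain ⟨v, hv⟩ := h
    have hconst := hG.apply_eq_of_adj (f := fun x => (x ∈ S ↔ x ∈ A)) (fun x y hxy => by
      grind [mem_compl]) v
    left; ext x
    rw [← hconst x]; exact hv
  · right; ext x
    have := not_exists.mp h x
    rw [mem_compl]; tauto

def joinEdgeless (H : SimpleGraph α) (β : Type*) : SimpleGraph (α ⊕ β) where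
  Adj
  | .inl a, .inl a' => H.Adj a a'
  | .inr _, .inr _ => False
  | _, _ => True
  symm := ⟨by rintro (a | b) (a' | b') h <;> simp_all [H.adj_symm]⟩
  loopless := ⟨by rintro (a | b) h <;> simp_all⟩

section joinEdgeless

variable (H : SimpleGraph α)

@[simp] theorem joinEdgeless_adj_inl_inl {a a' : α} :
    (joinEdgeless H β).Adj (.inl a) (.inl a') ↔ H.Adj a a' := .rfl

@[simp] theorem joinEdgeless_adj_inl_inr {a : α} {b : β} :
    (joinEdgeless H β).Adj (.inl a) (.inr b) := trivial

@[simp] theorem joinEdgeless_adj_inr_inl {a : α} {b : β} :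
    (joinEdgeless H β).Adj (.inr b) (.inl a) := trivial

@[simp] theorem not_joinEdgeless_adj_inr_inr {b b' : β} :
    ¬(joinEdgeless H β).Adj (.inr b) (.inr b') := id

instance [DecidableRel H.Adj] : DecidableRel (joinEdgeless H β).Adj
  | .inl a, .inl a' => inferInstanceAs (Decidable (H.Adj a a'))
  | .inl _, .inr _ => .isTrue trivial
  | .inr _, .inl _ => .isTrue trivial
  | .inr _, .inr _ => .isFalse id

variable [Fintype α] [Fintype β] [DecidableRel H.Adj]

theorem degree_joinEdgeless_inl (a : α) :
    (joinEdgeless H β).degree (.inl a) = H.degree a + Fintype.card β := by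
  rw [← card_neighborFinset_eq_degree, ← card_neighborFinset_eq_degree,
    show (joinEdgeless H β).neighborFinset (.inl a) = (H.neighborFinset a).disjSum univ by
      ext (a' | b) <;> simp,
    card_disjSum, card_univ]

theorem degree_joinEdgeless_inr (b : β) :
    (joinEdgeless H β).degree (.inr b) = Fintype.card α := by
  rw [← card_neighborFinset_eq_degree,
    show (joinEdgeless H β).neighborFinset (.inr b) = univ.disjSum ∅ by ext (a | b') <;> simp,
    card_disjSum, card_univ, card_empty, add_zero]

theorem two_mul_card_edgeFinset_joinEdgeless {d : ℕ} (hH : H.IsRegularOfDegree d) :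
    2 * #(joinEdgeless H β).edgeFinset = Fintype.card α * (d + 2 * Fintype.card β) := by
  rw [← sum_degrees_eq_twice_card_edges, Fintype.sum_sum_type]
  simp only [degree_joinEdgeless_inl, degree_joinEdgeless_inr, hH.degree_eq, sum_const, card_univ,
    smul_eq_mul]
  ring

end joinEdgeless

/-- Disjoint copies of the crown graph on `W × Bool` (`K_{W,W}` minus a perfect matching),
indexed by `ι`, and of `K_{U,U}`, indexed by `κ`. -/
def crownsAndBicliques (ι W κ U : Type*) : SimpleGraph (ι × W × Bool ⊕ κ × U × Bool) where
  Adj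
  | .inl (i, p, s), .inl (j, q, t) => i = j ∧ p ≠ q ∧ s ≠ t
  | .inr (i, _, s), .inr (j, _, t) => i = j ∧ s ≠ t
  | _, _ => False
  symm := ⟨by rintro (⟨i, p, s⟩ | ⟨i, p, s⟩) (⟨j, q, t⟩ | ⟨j, q, t⟩) h <;> simp_all [eq_comm]⟩
  loopless := ⟨by rintro (⟨i, p, s⟩ | ⟨i, p, s⟩) h <;> simp_all⟩

namespace crownsAndBicliques

@[simp] theorem adj_inl_inl {i j : ι} {p q : W} {s t : Bool} :
    (crownsAndBicliques ι W κ U).Adj (.inl (i, p, s)) (.inl (j, q, t)) ↔ i = j ∧ p ≠ q ∧ s ≠ t :=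
  .rfl

@[simp] theorem adj_inr_inr {i j : κ} {p q : U} {s t : Bool} :
    (crownsAndBicliques ι W κ U).Adj (.inr (i, p, s)) (.inr (j, q, t)) ↔ i = j ∧ s ≠ t :=
  .rfl

@[simp] theorem not_adj_inl_inr {x : ι × W × Bool} {y : κ × U × Bool} :
    ¬(crownsAndBicliques ι W κ U).Adj (.inl x) (.inr y) := id

@[simp] theorem not_adj_inr_inl {x : ι × W × Bool} {y : κ × U × Bool} :
    ¬(crownsAndBicliques ι W κ U).Adj (.inr y) (.inl x) := id

instance [DecidableEq ι] [DecidableEq W] [DecidableEq κ] :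
    DecidableRel (crownsAndBicliques ι W κ U).Adj
  | .inl (i, p, s), .inl (j, q, t) => inferInstanceAs (Decidable (i = j ∧ p ≠ q ∧ s ≠ t))
  | .inr (i, _, s), .inr (j, _, t) => inferInstanceAs (Decidable (i = j ∧ s ≠ t))
  | .inl _, .inr _ => .isFalse id
  | .inr _, .inl _ => .isFalse id

def block : ι × W × Bool ⊕ κ × U × Bool → ι ⊕ κ := Sum.map Prod.fst Prod.fst

theorem block_eq_of_adj {x y : ι × W × Bool ⊕ κ × U × Bool}
    (h : (crownsAndBicliques ι W κ U).Adj x y) : block x = block y := by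
  rcases x with ⟨i, p, s⟩ | ⟨i, p, s⟩ <;> rcases y with ⟨j, q, t⟩ | ⟨j, q, t⟩ <;>
    simp_all [block]

theorem colorable_two : (crownsAndBicliques ι W κ U).Colorable 2 := by
  refine (Coloring.mk (α := Bool) (Sum.elim (fun x => x.2.2) (fun y => y.2.2))
    fun {x y} h => ?_).colorable
  rcases x with ⟨i, p, s⟩ | ⟨i, p, s⟩ <;> rcases y with ⟨j, q, t⟩ | ⟨j, q, t⟩ <;> simp_all

variable [Fintype ι] [Fintype W] [Fintype κ] [Fintype U] [DecidableEq ι] [DecidableEq W]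
  [DecidableEq κ] [DecidableEq U]

theorem degree_inl (i : ι) (p : W) (s : Bool) :
    (crownsAndBicliques ι W κ U).degree (.inl (i, p, s)) = Fintype.card W - 1 := by
  have : (crownsAndBicliques ι W κ U).neighborFinset (.inl (i, p, s)) =
      (univ.erase p).image fun q => .inl (i, q, !s) := by
    ext (⟨j, q, t⟩ | ⟨j, q, t⟩) <;> simp [eq_comm, Bool.eq_not_iff, and_left_comm]
  rw [← card_neighborFinset_eq_degree, this,
    card_image_of_injective _ (fun q q' h => by simpa using h),
    card_erase_of_mem (mem_univ p), card_univ]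

theorem degree_inr (i : κ) (p : U) (s : Bool) :
    (crownsAndBicliques ι W κ U).degree (.inr (i, p, s)) = Fintype.card U := by
  have : (crownsAndBicliques ι W κ U).neighborFinset (.inr (i, p, s)) =
      univ.image fun q => .inr (i, q, !s) := by
    ext (⟨j, q, t⟩ | ⟨j, q, t⟩) <;> simp [eq_comm, Bool.eq_not_iff]
  rw [← card_neighborFinset_eq_degree, this,
    card_image_of_injective _ (fun q q' h => by simpa using h),
    card_univ]

theorem isRegularOfDegree {K : ℕ} (hW : Fintype.card W = K + 1) (hU : Fintype.card U = K) :
    (crownsAndBicliques ι W κ U).IsRegularOfDegree K := by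
  rintro (⟨i, p, s⟩ | ⟨i, p, s⟩)
  · rw [degree_inl, hW, Nat.add_sub_cancel]
  · rw [degree_inr, hU]

theorem card_filter_block_le (j : ι ⊕ κ) :
    #{x : ι × W × Bool ⊕ κ × U × Bool | block x = j} ≤
      2 * max (Fintype.card W) (Fintype.card U) := by
  rcases j with i | i
  · calc #{x | block x = .inl i}
        ≤ #(univ.image fun pw : W × Bool => (.inl (i, pw) : ι × W × Bool ⊕ κ × U × Bool)) :=
          card_le_card fun x => by rcases x with ⟨j, pw⟩ | _ <;> simp [block, eq_comm]
      _ ≤ 2 * max (Fintype.card W) (Fintype.card U) := by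
          grw [card_image_le, card_univ, Fintype.card_prod, Fintype.card_bool, ← le_max_left]
          rw [mul_comm]
  · calc #{x | block x = .inr i}
        ≤ #(univ.image fun pu : U × Bool => (.inr (i, pu) : ι × W × Bool ⊕ κ × U × Bool)) :=
          card_le_card fun x => by rcases x with _ | ⟨j, pu⟩ <;> simp [block, eq_comm]
      _ ≤ 2 * max (Fintype.card W) (Fintype.card U) := by
          grw [card_image_le, card_univ, Fintype.card_prod, Fintype.card_bool, ← le_max_right]
          rw [mul_comm]

end crownsAndBicliques

end SimpleGraph

open SimpleGraph

section suspension

variable {V α β ι : Type*} {T : SimpleGraph V}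

theorem suspension_adj_none_some (T : SimpleGraph V) (v : V) :
    (suspension T).Adj none (some v) := by
  simp [suspension]

theorem suspension_adj_some_some {u v : V} : (suspension T).Adj (some u) (some v) ↔ T.Adj u v := by
  simp only [suspension, fromRel_adj, ne_eq, Option.some.injEq, reduceCtorEq, false_or]
  constructor
  · rintro ⟨-, ⟨a, b, rfl, rfl, h⟩ | ⟨a, b, rfl, rfl, h⟩⟩
    exacts [h, h.symm]
  · exact fun h => ⟨h.ne, .inl ⟨u, v, rfl, rfl, h⟩⟩

variable [Fintype V] [Fintype α] {H : SimpleGraph α}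

theorem SimpleGraph.Copy.apex_ne_inr (f : Copy (suspension T) (joinEdgeless H β))
    (hT : T.Connected) [DecidableEq ι] (π : α → ι) (hπ : ∀ a a', H.Adj a a' → π a = π a')
    (hfib : ∀ i, #{a | π a = i} < Fintype.card V)
    (b : β) : f none ≠ .inr b := by
  intro hb
  have hleft : ∀ v, ∃ a, f (some v) = .inl a := by
    intro v
    have hadj := f.toHom.map_adj (suspension_adj_none_some T v)
    simp only [Copy.toHom_apply, hb] at hadj
    cases h : f (some v) with
    | inl a => exact ⟨a, rfl⟩
    | inr b' => rw [h] at hadj; exact absurd hadj (not_joinEdgeless_adj_inr_inr H)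
  choose g hg using hleft
  have hgadj : ∀ u v, T.Adj u v → H.Adj (g u) (g v) := by
    intro u v huv
    simpa [hg] using f.toHom.map_adj (suspension_adj_some_some.mpr huv)
  have hginj : Function.Injective g := fun u v h =>
    Option.some_injective _ (f.injective (by simp [hg, h]))
  obtain ⟨v₀⟩ := hT.nonempty
  have hblock (v : V) : π (g v) = π (g v₀) :=
    hT.preconnected.apply_eq_of_adj (f := π ∘ g) (fun u v h => hπ _ _ (hgadj u v h)) v v₀
  have := card_le_card_of_injOn g (s := univ) (t := {a | π a = π (g v₀)})
    (fun v _ => by simp [hblock v]) hginj.injOn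
  rw [card_univ] at this
  exact (hfib _).not_ge this

theorem SimpleGraph.Copy.apex_ne_inl [DecidableEq V]
    (f : Copy (suspension T) (joinEdgeless H β)) (hT : T.Preconnected) {A : Finset V}
    (hA : ∀ x ∈ A, ∀ y ∈ A, ¬T.Adj x y) (hAc : ∀ x ∈ Aᶜ, ∀ y ∈ Aᶜ, ¬T.Adj x y) {k : ℕ}
    (hkA : k ≤ #A) (hkAc : k ≤ #Aᶜ) [DecidableRel H.Adj] (hH : H.CliqueFree 3)
    (hdeg : ∀ a, H.degree a < k) (w : α) : f none ≠ .inl w := by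
  classical
  intro hw
  have hapex (v : V) : (joinEdgeless H β).Adj (.inl w) (f (some v)) :=
    hw ▸ f.toHom.map_adj (suspension_adj_none_some T v)
  have hedge {u v : V} (h : T.Adj u v) : (joinEdgeless H β).Adj (f (some u)) (f (some v)) :=
    f.toHom.map_adj (suspension_adj_some_some.mpr h)
  set S : Finset V := {v | (f (some v)).isLeft}
  have hS : ∀ u ∈ S, ∀ v ∈ S, ¬T.Adj u v := by
    intro u hu v hv huv
    obtain ⟨a, ha⟩ := Sum.isLeft_iff.mp (mem_filter.mp hu).2
    obtain ⟨a', ha'⟩ := Sum.isLeft_iff.mp (mem_filter.mp hv).2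
    have h₁ := hapex u
    have h₂ := hapex v
    have h₃ := hedge huv
    rw [ha, ha'] at *
    exact hH {w, a, a'} (is3Clique_triple_iff.mpr ⟨h₁, h₂, h₃⟩)
  have hSc : ∀ u ∈ Sᶜ, ∀ v ∈ Sᶜ, ¬T.Adj u v := by
    intro u hu v hv huv
    simp only [S, mem_compl, mem_filter, mem_univ, true_and, Sum.not_isLeft] at hu hv
    obtain ⟨b, hb⟩ := Sum.isRight_iff.mp hu
    obtain ⟨b', hb'⟩ := Sum.isRight_iff.mp hv
    have := hedge huv
    rw [hb, hb'] at this
    exact not_joinEdgeless_adj_inr_inr H this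
  have hcard : #S ≤ H.degree w := by
    calc #S ≤ #((H.neighborFinset w).map .inl) :=
          card_le_card_of_injOn (fun v => f (some v)) (fun v hv => ?_)
            (fun u _ v _ h => Option.some_injective _ (f.injective h))
      _ = H.degree w := by rw [card_map, card_neighborFinset_eq_degree]
    obtain ⟨a, ha⟩ := Sum.isLeft_iff.mp (mem_filter.mp hv).2
    have := hapex v
    rw [ha] at this
    simpa [ha] using this
  rcases hT.eq_or_eq_compl hA hAc hS hSc with h | h <;> rw [h] at hcard <;> linarith [hdeg w]

theorem suspension_free_joinEdgeless [DecidableEq V] [DecidableEq ι]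
    [DecidableRel H.Adj] (hT : T.Connected) {A : Finset V}
    (hA : ∀ x ∈ A, ∀ y ∈ A, ¬T.Adj x y) (hAc : ∀ x ∈ Aᶜ, ∀ y ∈ Aᶜ, ¬T.Adj x y) {k : ℕ}
    (hkA : k ≤ #A) (hkAc : k ≤ #Aᶜ) (hH : H.CliqueFree 3) (hdeg : ∀ a, H.degree a < k)
    (π : α → ι) (hπ : ∀ a a', H.Adj a a' → π a = π a')
    (hfib : ∀ i, #{a | π a = i} < Fintype.card V) :
    (suspension T).Free (joinEdgeless H β) := by
  rintro ⟨f⟩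
  cases h : f none with
  | inl w => exact f.apex_ne_inl hT.preconnected hA hAc hkA hkAc hH hdeg w h
  | inr b => exact f.apex_ne_inr hT π hπ hfib b h

end suspension

theorem stmt4 (k : ℕ) (hk : 2 ≤ k)
    {V : Type} [Fintype V] [DecidableEq V] (T : SimpleGraph V)
    (htree : T.IsTree)
    (hcard : Fintype.card V = 2 * k + 1)
    (A : Finset V) (hA : A.card = k)
    (hAind : ∀ x ∈ A, ∀ y ∈ A, ¬ T.Adj x y)
    (hAcind : ∀ x ∈ Aᶜ, ∀ y ∈ Aᶜ, ¬ T.Adj x y)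
    (n : ℕ) (hn : 4 * k ^ 2 ≤ n)
    (heven : 2 ∣ (2 * n + k) / 4) :
    ∃ G : SimpleGraph (Fin n),
      (¬ ∃ f : suspension T →g G, Function.Injective f) ∧
        G.edgeSet.ncard = turanF n k := by
  obtain ⟨K, rfl⟩ : ∃ K, k = K + 1 := ⟨k - 1, by omega⟩
  set P := (2 * n + (K + 1)) / 4 with hP
  have hK : K * (K - 1) ≤ (K + 1) ^ 2 := by rw [sq]; exact Nat.mul_le_mul (by omega) (by omega)
  have hKn : K + 1 ≤ (K + 1) ^ 2 := Nat.le_self_pow two_ne_zero _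
  have hPn : P ≤ n := by omega
  obtain ⟨b, m, hbm⟩ := exists_mul_succ_add_mul_eq (K := K) (N := P / 2) (by omega)
  set H := crownsAndBicliques (Fin b) (Fin (K + 1)) (Fin m) (Fin K)
  have hH : H.IsRegularOfDegree K := crownsAndBicliques.isRegularOfDegree (by simp) (by simp)
  set G := joinEdgeless H (Fin (n - P))
  have hcardα : Fintype.card (Fin b × Fin (K + 1) × Bool ⊕ Fin m × Fin K × Bool) = P := by
    simp only [Fintype.card_sum, Fintype.card_prod, Fintype.card_fin, Fintype.card_bool]
    rw [← Nat.div_mul_cancel heven, ← hbm]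
    ring
  have hcardG :
      Fintype.card ((Fin b × Fin (K + 1) × Bool ⊕ Fin m × Fin K × Bool) ⊕ Fin (n - P)) = n := by
    rw [Fintype.card_sum, hcardα, Fintype.card_fin]
    omega
  refine ⟨G.overFin hcardG, fun ⟨f, hf⟩ => ?_, ?_⟩
  · refine (free_congr_right (G.overFinIso hcardG)).mp ?_ ⟨f.toCopy hf⟩
    refine suspension_free_joinEdgeless htree.connected hAind hAcind (k := K + 1) hA.ge
      (by rw [card_compl]; omega) (crownsAndBicliques.colorable_two.cliqueFree (by norm_num))
      (fun a => by rw [hH.degree_eq]; omega) crownsAndBicliques.block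
      (fun _ _ => crownsAndBicliques.block_eq_of_adj) (fun j => ?_)
    grw [crownsAndBicliques.card_filter_block_le j]
    simp only [Fintype.card_fin]
    omega
  · have hE : 2 * #G.edgeFinset = 2 * (P * (n - P)) + K * P := by
      rw [two_mul_card_edgeFinset_joinEdgeless H hH, hcardα, Fintype.card_fin]
      ring
    have hKP : 2 ∣ K * P := heven.mul_left K
    rw [turanF_eq (P := P) (by omega) (by omega) (by omega) hPn (even_iff_two_dvd.mpr heven),
      ← Nat.card_coe_set_eq, ← Nat.card_congr (G.overFinIso hcardG).mapEdgeSet,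
      Nat.card_coe_set_eq, ← coe_edgeFinset, Set.ncard_coe_finset, Nat.add_sub_cancel]
    omega
end

section
/- Let k ≥ 1 be an integer and let T be a balanced tree on 2k or 2k+1 vertices that contains a matching of size k. Then for every integer n ≥ 2k, there exists a T̂-free graph on n vertices with exactly f(n,k) edges; in particular ex(n, T̂) ≥ f(n,k). -/
/-!
Choose `n₀` attaining the maximum in `f(n,k)` with `k ≤ n₀` and `(k - 1) n₀` even. A disjoint
union of `(k - 1)`-regular graphs on between `k` and `2k - 1` vertices (circulants, or complements
of circulants) gives a graph `H` on `n₀` vertices with `(k - 1) n₀ / 2` edges and no copy of the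
connected graph `T`, which has at least `2k` vertices. Join `H` completely to an independent set
of `n - n₀` vertices. In a copy of `T̂` whose apex lies in the independent set, `T` itself lies
in `H`; if the apex lies in `H`, each of the `k` matching edges of `T` has an end in `H`, giving
the apex `k` neighbours in the `(k - 1)`-regular graph `H`.
-/

open Function

lemma mul_sub_le_mul_sub {a b n : ℕ} (hab : a ≤ b) (hbn : a + b ≤ n) :
    a * (n - a) ≤ b * (n - b) := by
  zify [show a ≤ n by omega, show b ≤ n by omega]
  nlinarith

lemma exists_eq_turanF {n k : ℕ} (hn : 2 * k ≤ n) :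
    ∃ n₀, k ≤ n₀ ∧ n₀ ≤ n ∧ Even ((k - 1) * n₀) ∧
      turanF n k = n₀ * (n - n₀) + (k - 1) * n₀ / 2 := by
  set g : ℕ → ℕ := fun a => a * (n - a) + (k - 1) * a / 2 with hg
  suffices h : ∀ a ≤ n, ∃ b, k ≤ b ∧ b ≤ n ∧ Even ((k - 1) * b) ∧ g a ≤ g b by
    obtain ⟨a, ha, hmax⟩ := Finset.exists_mem_eq_sup _ Finset.nonempty_range_add_one g
    obtain ⟨b, hkb, hbn, hev, hab⟩ := h a (Nat.lt_succ_iff.mp (Finset.mem_range.mp ha))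
    have hF : turanF n k = g a := hmax
    exact ⟨b, hkb, hbn, hev, le_antisymm (hF ▸ hab) (Finset.le_sup (f := g) (Finset.mem_range.mpr (by omega)))⟩
  intro a han
  rcases lt_or_ge a k with hak | hka
  · refine ⟨k, le_rfl, by omega, by simpa [mul_comm] using Nat.even_mul_pred_self k, ?_⟩
    exact add_le_add (mul_sub_le_mul_sub hak.le (by omega))
      (Nat.div_le_div_right (Nat.mul_le_mul_left _ hak.le))
  rcases Nat.even_or_odd ((k - 1) * a) with hev | hodd
  · exact ⟨a, hka, han, hev, le_rfl⟩
  -- `k` is even and `a` odd: `g` has no strict local maximum at `a`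
  obtain ⟨hk, ha⟩ := Nat.odd_mul.mp hodd
  rw [Nat.odd_iff] at hk ha hodd
  have hPsub : (k - 1) * (a - 1) + (k - 1) = (k - 1) * a := by
    rw [Nat.mul_sub_one, Nat.sub_add_cancel (Nat.le_mul_of_pos_right _ (by omega))]
  have hPadd : (k - 1) * (a + 1) = (k - 1) * a + (k - 1) := by ring
  by_cases h : 2 * n + k ≤ 4 * a
  · refine ⟨a - 1, by omega, by omega, ?_, ?_⟩
    · exact (Nat.even_iff.mpr (by omega)).mul_left _
    have hB : (a - 1) * (n - (a - 1)) + (n - a) + 1 = a * (n - a) + a := by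
      obtain ⟨a', rfl⟩ : ∃ a', a = a' + 1 := ⟨a - 1, by omega⟩
      obtain ⟨c, rfl⟩ : ∃ c, n = a' + 1 + c := ⟨n - (a' + 1), by omega⟩
      simp only [Nat.add_sub_cancel, show a' + 1 + c - a' = c + 1 by omega,
        Nat.add_sub_cancel_left]
      ring
    simp only [hg]
    omega
  · refine ⟨a + 1, by omega, by omega, ?_, ?_⟩
    · exact (Nat.even_iff.mpr (by omega)).mul_left _
    have hC : (a + 1) * (n - (a + 1)) + a + 1 = a * (n - a) + (n - a) := by
      obtain ⟨c, rfl⟩ : ∃ c, n = a + 1 + c := ⟨n - (a + 1), by omega⟩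
      simp only [Nat.add_sub_cancel_left, show a + 1 + c - a = c + 1 by omega]
      ring
    simp only [hg]
    omega

namespace SimpleGraph

variable {U V W : Type*}

lemma neighborSet_circulantGraph {G : Type*} [AddCommGroup G] (s : Set G) (v : G) :
    (circulantGraph s).neighborSet v = (v + ·) '' ((s ∪ -s) \ {0}) := by
  ext w
  simp only [mem_neighborSet, circulantGraph_adj, Set.mem_image, Set.mem_sdiff, Set.mem_union,
    Set.mem_neg, Set.mem_singleton_iff]
  constructor
  · rintro ⟨hvw, h⟩
    refine ⟨w - v, ⟨?_, sub_ne_zero.mpr (Ne.symm hvw)⟩, add_sub_cancel v w⟩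
    rwa [neg_sub, or_comm]
  · rintro ⟨x, ⟨hx, hx0⟩, rfl⟩
    refine ⟨by simpa using hx0, ?_⟩
    simpa [or_comm] using hx

lemma ncard_neighborSet_compl [Finite V] (G : SimpleGraph V) (v : V) :
    (Gᶜ.neighborSet v).ncard = Nat.card V - 1 - (G.neighborSet v).ncard := by
  rw [neighborSet_compl,
    Set.ncard_sdiff_singleton_of_mem (Set.mem_compl G.notMem_neighborSet_self), Set.ncard_compl]
  omega

lemma exists_regular_two_mul {m e : ℕ} (he : 2 * e < m) :
    ∃ R : SimpleGraph (ZMod m), ∀ v, (R.neighborSet v).ncard = 2 * e := by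
  have : NeZero m := ⟨by omega⟩
  set s : Set (ZMod m) := (Nat.cast : ℕ → ZMod m) '' Set.Icc 1 e
  have hcast : ∀ a ∈ Set.Icc 1 (2 * e), (a : ZMod m) ≠ 0 := by
    rintro a ⟨ha1, ha2⟩ h
    rw [ZMod.natCast_eq_zero_iff] at h
    exact absurd (Nat.le_of_dvd (by omega) h) (by omega)
  have hs : s.ncard = e := by
    rw [Set.InjOn.ncard_image, Set.ncard_Icc_nat, Nat.add_sub_cancel]
    rintro a ⟨ha1, ha2⟩ b ⟨hb1, hb2⟩ h
    rw [ZMod.natCast_eq_natCast_iff'] at h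
    rwa [Nat.mod_eq_of_lt (by omega), Nat.mod_eq_of_lt (by omega)] at h
  have hdisj : Disjoint s (-s) := by
    rw [Set.disjoint_left]
    rintro _ ⟨a, ⟨ha1, ha2⟩, rfl⟩ ⟨b, ⟨hb1, hb2⟩, hab⟩
    refine hcast (b + a) ⟨by omega, by omega⟩ ?_
    push_cast
    rw [hab]; ring
  have h0 : (0 : ZMod m) ∉ s ∪ -s := by
    rintro (⟨a, ⟨ha1, ha2⟩, h⟩ | ⟨a, ⟨ha1, ha2⟩, h⟩)
    · exact hcast a ⟨ha1, by omega⟩ h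
    · exact hcast a ⟨ha1, by omega⟩ (by simpa using h)
  refine ⟨circulantGraph s, fun v => ?_⟩
  rw [neighborSet_circulantGraph, Set.ncard_image_of_injective _ (add_right_injective v),
    Set.sdiff_singleton_eq_self h0, Set.ncard_union_eq hdisj, Set.ncard_neg, hs, two_mul]

theorem exists_regular {d m : ℕ} (hdm : d < m) (heven : Even (d * m)) :
    ∃ R : SimpleGraph (ZMod m), ∀ v, (R.neighborSet v).ncard = d := by
  have : NeZero m := ⟨by omega⟩
  rcases Nat.even_or_odd d with ⟨e, rfl⟩ | hd
  · simpa [two_mul] using exists_regular_two_mul (m := m) (e := e) (by omega)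
  -- `m` is even, so the complement of an `(m - 1 - d)`-regular graph will do
  have hm := (Nat.even_mul.mp heven).resolve_left (Nat.not_even_iff_odd.mpr hd)
  obtain ⟨e, he⟩ : Even (m - 1 - d) := by
    rw [Nat.even_sub (by omega), Nat.even_sub (by omega)]
    simp [hm, Nat.not_even_iff_odd.mpr hd]
  obtain ⟨R, hR⟩ := exists_regular_two_mul (m := m) (e := e) (by omega)
  refine ⟨Rᶜ, fun v => ?_⟩
  rw [ncard_neighborSet_compl, hR, Nat.card_zmod]
  omega

lemma two_mul_ncard_edgeSet [Finite V] {G : SimpleGraph V} {d : ℕ}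
    (hG : ∀ v, (G.neighborSet v).ncard = d) : 2 * G.edgeSet.ncard = d * Nat.card V := by
  classical
  have := Fintype.ofFinite V
  have hdeg (v : V) : G.degree v = d := by
    rw [← card_neighborSet_eq_degree, ← Nat.card_eq_fintype_card, Nat.card_coe_set_eq, hG]
  rw [← coe_edgeFinset, Set.ncard_coe_finset, ← sum_degrees_eq_twice_card_edges]
  simp [hdeg, Nat.card_eq_fintype_card, mul_comm]

lemma free_of_card_lt [Finite W] {T : SimpleGraph U} {G : SimpleGraph W}
    (h : Nat.card W < Nat.card U) : T.Free G := fun ⟨f⟩ =>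
  h.not_ge (Nat.card_le_card_of_injective f f.injective)

lemma Connected.isContained_of_copy_sum {T : SimpleGraph U} {G : SimpleGraph V}
    {H : SimpleGraph W} (hT : T.Connected) (f : Copy T (G ⊕g H)) {u : U} {a : V}
    (hu : f u = .inl a) : T ⊑ G := by
  have hleft (v : U) : ∃ b, f v = .inl b := by
    rcases hv : f v with b | c
    · exact ⟨b, rfl⟩
    · have := (hT.preconnected u v).map f.toHom
      rw [Copy.coe_toHom, hu, hv] at this
      exact absurd this (not_reachable_sum_inl_inr a c)
  choose g hg using hleft
  exact ⟨⟨⟨g, fun h => by simpa [hg] using f.toHom.map_adj h⟩,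
    fun v w h => f.injective (by simpa [hg] using h)⟩⟩

lemma Connected.free_sum {T : SimpleGraph U} {G : SimpleGraph V} {H : SimpleGraph W}
    (hT : T.Connected) (hG : T.Free G) (hH : T.Free H) : T.Free (G ⊕g H) := by
  rintro ⟨f⟩
  obtain ⟨u⟩ := hT.nonempty
  rcases hu : f u with a | b
  · exact hG (hT.isContained_of_copy_sum f hu)
  · exact hH (hT.isContained_of_copy_sum (Iso.sumComm.toCopy.comp f) (u := u) (a := b)
      (by simp [Copy.comp_apply, hu, Iso.sumComm]))

theorem Connected.exists_regular_free {T : SimpleGraph U} (hT : T.Connected) {d : ℕ}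
    (hU : 2 * d + 2 ≤ Nat.card U) (m : ℕ) (hdm : d < m) (heven : Even (d * m)) :
    ∃ (β : Type) (_ : Finite β) (H : SimpleGraph β),
      Nat.card β = m ∧ (∀ b, (H.neighborSet b).ncard = d) ∧ T.Free H := by
  induction m using Nat.strong_induction_on with
  | _ m ih =>
  by_cases hm : m ≤ 2 * d + 1
  · have : NeZero m := ⟨by omega⟩
    obtain ⟨R, hR⟩ := exists_regular hdm heven
    exact ⟨ZMod m, inferInstance, R, Nat.card_zmod m, hR, free_of_card_lt (by rw [Nat.card_zmod]; omega)⟩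
  have hk : Even (d * (d + 1)) := by simpa [mul_comm] using Nat.even_mul_pred_self (d + 1)
  obtain ⟨β, _, H, hβ, hH, hfree⟩ := ih (m - (d + 1)) (by omega) (by omega) (by
    rw [Nat.mul_sub, Nat.even_sub (Nat.mul_le_mul_left _ (by omega))]
    exact iff_of_true heven hk)
  obtain ⟨R, hR⟩ := exists_regular (lt_add_one d) hk
  refine ⟨ZMod (d + 1) ⊕ β, inferInstance, R ⊕g H, ?_, ?_,
    hT.free_sum (free_of_card_lt (by rw [Nat.card_zmod]; omega)) hfree⟩
  · rw [Nat.card_sum, Nat.card_zmod, hβ]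
    omega
  · rintro (a | b)
    · rw [neighborSet_sum_inl, Set.ncard_image_of_injective _ Sum.inl_injective, hR]
    · rw [neighborSet_sum_inr, Set.ncard_image_of_injective _ Sum.inr_injective, hH]

def join (G : SimpleGraph V) (H : SimpleGraph W) : SimpleGraph (V ⊕ W) :=
  (G ⊕g H) ⊔ completeBipartiteGraph V W

section join

variable {G : SimpleGraph V} {H : SimpleGraph W}

@[simp] lemma join_adj_inl_inl {a a' : V} : (G.join H).Adj (.inl a) (.inl a') ↔ G.Adj a a' := by
  simp [join]

@[simp] lemma join_adj_inr_inr {b b' : W} : (G.join H).Adj (.inr b) (.inr b') ↔ H.Adj b b' := by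
  simp [join]

lemma ncard_edgeSet_join [Finite V] [Finite W] :
    (G.join H).edgeSet.ncard = G.edgeSet.ncard + H.edgeSet.ncard + Nat.card V * Nat.card W := by
  have hdisj : Disjoint (G ⊕g H).edgeSet (completeBipartiteGraph V W).edgeSet := by
    rw [Set.disjoint_left]
    refine Sym2.ind fun u v h h' => ?_
    cases u <;> cases v <;> simp_all
  rw [join, edgeSet_sup, Set.ncard_union_eq hdisj, ← Nat.card_coe_set_eq,
    Nat.card_congr edgeSetSumEquiv, Nat.card_sum, Set.ncard_def,
    encard_edgeSet_completeBipartiteGraph]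
  simp [ENat.card_eq_coe_natCard]

end join

lemma Iso.ncard_edgeSet_eq {G : SimpleGraph V} {G' : SimpleGraph W} (f : G ≃g G') :
    G.edgeSet.ncard = G'.edgeSet.ncard := by
  simpa only [Nat.card_coe_set_eq] using Nat.card_congr f.mapEdgeSet

end SimpleGraph

open SimpleGraph

lemma suspension_adj_none {V : Type*} (T : SimpleGraph V) (v : V) :
    (suspension T).Adj none (some v) := by
  simp [suspension]

lemma suspension_adj_some {V : Type*} {T : SimpleGraph V} {u v : V} (h : T.Adj u v) :
    (suspension T).Adj (some u) (some v) := by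
  simp [suspension, h, h.ne]

theorem suspension_free_join_bot {V W : Type*} [Finite W] {T : SimpleGraph V}
    {H : SimpleGraph W} (γ : Type*) {k : ℕ} (hTH : T.Free H) (x y : Fin k → V)
    (hxy : ∀ i, T.Adj (x i) (y i)) (hinj : Injective (Sum.elim x y))
    (hdeg : ∀ w, (H.neighborSet w).ncard < k) :
    (suspension T).Free (H.join (⊥ : SimpleGraph γ)) := by
  rintro ⟨f⟩
  have hapex (v : V) := f.toHom.map_adj (suspension_adj_none T v)
  have hedge {u v : V} (h : T.Adj u v) := f.toHom.map_adj (suspension_adj_some h)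
  simp only [Copy.coe_toHom] at hapex hedge
  rcases ha : f none with b | c
  · -- every edge `x i y i` has an end in `W`, which is a neighbour of `b`
    have hend (i : Fin k) : ∃ (j : Fin k ⊕ Fin k) (w : W),
        (j = .inl i ∨ j = .inr i) ∧ f (some (Sum.elim x y j)) = .inl w := by
      have := hedge (hxy i)
      rcases hx : f (some (x i)) with w | c
      · exact ⟨.inl i, w, .inl rfl, hx⟩
      rcases hy : f (some (y i)) with w | c'
      · exact ⟨.inr i, w, .inr rfl, hy⟩
      simp [hx, hy] at this
    choose j w hj hw using hend
    have hwinj : Injective w := by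
      intro i i' h
      have hf : f (some (Sum.elim x y (j i))) = f (some (Sum.elim x y (j i'))) := by
        rw [hw, hw, h]
      have := hinj (Option.some_injective _ (f.injective hf))
      rcases hj i with h1 | h1 <;> rcases hj i' with h2 | h2 <;> simp_all
    have hwadj (i : Fin k) : w i ∈ H.neighborSet b := by
      simpa [ha, hw] using hapex (Sum.elim x y (j i))
    have := Nat.card_le_card_of_injective (fun i => (⟨w i, hwadj i⟩ : H.neighborSet b))
      fun i i' h => hwinj (congrArg Subtype.val h)
    simp only [Nat.card_eq_fintype_card, Fintype.card_fin, Nat.card_coe_set_eq] at this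
    exact (hdeg b).not_ge this
  · -- the apex lies in the independent side, so `T` is mapped into `H`
    have hleft (v : V) : ∃ w, f (some v) = .inl w := by
      have := hapex v
      rcases hv : f (some v) with w | c'
      · exact ⟨w, rfl⟩
      simp [ha, hv] at this
    choose g hg using hleft
    exact hTH ⟨⟨⟨g, fun h => by simpa [hg] using hedge h⟩,
      fun u v h => Option.some_injective _ (f.injective (by simpa [hg] using h))⟩⟩

theorem stmt5_general (k : ℕ) (hk : 1 ≤ k)
    {V : Type} [Fintype V] (T : SimpleGraph V)
    (htree : T.IsTree)
    (hcard : Fintype.card V = 2 * k ∨ Fintype.card V = 2 * k + 1)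
    -- `T` contains a matching of size `k`
    (x y : Fin k → V) (hmatch : ∀ i, T.Adj (x i) (y i))
    (hinj : Function.Injective (Sum.elim x y : Fin k ⊕ Fin k → V))
    (n : ℕ) (hn : 2 * k ≤ n) :
    ∃ G : SimpleGraph (Fin n),
      (¬ ∃ f : suspension T →g G, Function.Injective f) ∧
        G.edgeSet.ncard = turanF n k := by
  obtain ⟨n₀, hkn₀, hn₀n, heven, hF⟩ := exists_eq_turanF hn
  obtain ⟨β, _, H, hβ, hreg, hfree⟩ := htree.connected.exists_regular_free (d := k - 1)
    (by rw [Nat.card_eq_fintype_card]; omega) n₀ (by omega) heven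
  have hsusp := suspension_free_join_bot (Fin (n - n₀)) hfree x y hmatch hinj
    (fun b => by rw [hreg]; omega)
  let e := Finite.equivFinOfCardEq (α := β ⊕ Fin (n - n₀)) (n := n)
    (by simp [Nat.card_sum, hβ]; omega)
  let φ := Iso.map e (H.join ⊥)
  refine ⟨_, fun ⟨f, hf⟩ => (free_congr_right φ).1 hsusp ⟨⟨f, hf⟩⟩, ?_⟩
  have hedges := hβ ▸ two_mul_ncard_edgeSet hreg
  rw [← φ.ncard_edgeSet_eq, ncard_edgeSet_join, hF, edgeSet_bot, Set.ncard_empty,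
    hβ, Nat.card_eq_fintype_card, Fintype.card_fin]
  omega

theorem stmt5 (k : ℕ) (hk : 1 ≤ k)
    {V : Type} [Fintype V] [DecidableEq V] (T : SimpleGraph V)
    (htree : T.IsTree)
    (hcard : Fintype.card V = 2 * k ∨ Fintype.card V = 2 * k + 1)
    (A : Finset V) (hA : A.card = k)
    (hAind : ∀ x ∈ A, ∀ y ∈ A, ¬ T.Adj x y)
    (hAcind : ∀ x ∈ Aᶜ, ∀ y ∈ Aᶜ, ¬ T.Adj x y)
    -- `T` contains a matching of size `k`
    (x y : Fin k → V) (hmatch : ∀ i, T.Adj (x i) (y i))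
    (hinj : Function.Injective (Sum.elim x y : Fin k ⊕ Fin k → V))
    (n : ℕ) (hn : 2 * k ≤ n) :
    ∃ G : SimpleGraph (Fin n),
      (¬ ∃ f : suspension T →g G, Function.Injective f) ∧
        G.edgeSet.ncard = turanF n k :=
  stmt5_general k hk T htree hcard x y hmatch hinj n hn
end
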